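/- Fix 0<α<1 and let ν_α be the Bernoulli product probability measure on {0,1}^{ℤ²} with ν_α{η : η(x) = 1} = α for every x ∈ ℤ². Let H:(0,∞)→ℝ be continuous with compact support in (0,∞), fix T ≥ 2, and define V_T(η) = Σ_{j=1,2} Σ_{x ∈ ℤ²∖{0}} (x_j/|x|²) H(σ_T(x)) [η(x+e_j) − η(x)] − (1/log T) Σ_{j=1,2} Σ_{x ∈ ℤ²∖{0}} (x_j²/|x|⁴) H(σ_T(x))² [η(x+e_j) − η(x)]². Then for every bounded measurable f:{0,1}^{ℤ²}→[0,∞) with ∫ f dν_α = 1: ∫ V_T(η) f(η) ν_α(dη) ≤ (log T / 4) Σ_{j=1,2} Σ_{x ∈ ℤ²} ∫ ( √(f(σ^{x,x+e_j} η)) − √(f(η)) )² ν_α(dη). -/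

import Mathlib

open MeasureTheory Set Filter
open scoped ENNReal Classical

noncomputable section

/-- Square of the Euclidean norm of a point of `ℤ²`. -/
def nsq (x : ℤ × ℤ) : ℝ := ((x.1 : ℝ)) ^ 2 + ((x.2 : ℝ)) ^ 2

/-- Euclidean norm of a point of `ℤ²`. -/
def enorm2 (x : ℤ × ℤ) : ℝ := Real.sqrt (nsq x)

/-- `σ_T(x) = log |x| / log T`. -/
def sig (T : ℝ) (x : ℤ × ℤ) : ℝ := Real.log (enorm2 x) / Real.log T

/-- Occupation variable, as a real number. -/
def ind (b : Bool) : ℝ := if b then 1 else 0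

/-- The configuration obtained from `η` by exchanging the occupation variables at `x`
and `y`. -/
def swapConf (x y : ℤ × ℤ) (η : ℤ × ℤ → Bool) : ℤ × ℤ → Bool :=
  fun z => if z = x then η y else if z = y then η x else η z

/-- The function `V_T(η)`: discrete gradient term minus quadratic term. -/
def VT (T : ℝ) (H : ℝ → ℝ) (η : ℤ × ℤ → Bool) : ℝ :=
  ((∑' x : ℤ × ℤ,
      if x ≠ 0 then ((x.1 : ℝ) / nsq x) * H (sig T x) *
        (ind (η (x + (1, 0))) - ind (η x)) else 0)
    + ∑' x : ℤ × ℤ,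
        if x ≠ 0 then ((x.2 : ℝ) / nsq x) * H (sig T x) *
          (ind (η (x + (0, 1))) - ind (η x)) else 0)
  - (1 / Real.log T) *
    ((∑' x : ℤ × ℤ,
        if x ≠ 0 then (((x.1 : ℝ)) ^ 2 / (nsq x) ^ 2) * (H (sig T x)) ^ 2 *
          (ind (η (x + (1, 0))) - ind (η x)) ^ 2 else 0)
      + ∑' x : ℤ × ℤ,
          if x ≠ 0 then (((x.2 : ℝ)) ^ 2 / (nsq x) ^ 2) * (H (sig T x)) ^ 2 *
            (ind (η (x + (0, 1))) - ind (η x)) ^ 2 else 0)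

/-!
Exchanging the occupation variables across a bond `(x, x + e)` preserves `ν_α` and reverses the
sign of the bond current `u = w(x) (η(x + e) - η(x))`. Symmetrizing,
`∫ (u - u²/L) f = ½ ∫ [u (f - f∘σ) - u² (f + f∘σ)/L]`; writing
`f - f∘σ = (√f - √(f∘σ)) (√f + √(f∘σ))`, Young's inequality bounds this integrand by
`(L/4) (√(f∘σ) - √f)²` bond by bond, with `L = log T`. As `H` has compact support, only finitely
many bonds have a nonzero weight, so the bonds can be summed.
-/

section

variable {ι : Type*}

def occupied (S : Finset ι) : Set (ι → Bool) := {η | ∀ x ∈ S, η x = true}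

lemma measurableSet_occupied (S : Finset ι) : MeasurableSet (occupied S) := by
  simp only [occupied, ofPred_forall]
  exact .biInter S.countable_toSet fun x _ =>
    measurableSet_eq_fun (measurable_pi_apply x) measurable_const

lemma isPiSystem_range_occupied : IsPiSystem (range (occupied (ι := ι))) := by
  rintro _ ⟨S, rfl⟩ _ ⟨S', rfl⟩ -
  refine ⟨S ∪ S', ?_⟩
  ext η
  simp [occupied, or_imp, forall_and]

lemma generateFrom_range_occupied :
    MeasurableSpace.generateFrom (range (occupied (ι := ι))) = MeasurableSpace.pi := by
  refine le_antisymm (MeasurableSpace.generateFrom_le ?_) (iSup_le fun i => ?_)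
  · rintro _ ⟨S, rfl⟩
    exact measurableSet_occupied S
  · refine Measurable.comap_le
      (measurable_to_bool (MeasurableSpace.measurableSet_generateFrom ⟨{i}, ?_⟩))
    ext η
    simp [occupied]

theorem measurePreserving_comp_perm {ν : Measure (ι → Bool)} [IsFiniteMeasure ν] {g : ℕ → ℝ≥0∞}
    (hν : ∀ S, ν (occupied S) = g S.card) (e : Equiv.Perm ι) :
    MeasurePreserving (fun η => η ∘ e) ν ν := by
  have he : Measurable fun η : ι → Bool => η ∘ e :=
    measurable_pi_lambda _ fun i => measurable_pi_apply (e i)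
  refine ⟨he, ext_of_generate_finite _ generateFrom_range_occupied.symm
    isPiSystem_range_occupied ?_ ?_⟩
  · rintro _ ⟨S, rfl⟩
    have : (fun η => η ∘ e) ⁻¹' occupied S = occupied (S.image e) := by
      ext η; simp [occupied]
    rw [Measure.map_apply he (measurableSet_occupied S), this, hν, hν,
      Finset.card_image_of_injective S e.injective]
  · rw [Measure.map_apply he .univ, preimage_univ]
end

lemma half_mul_sq_sub_sq_le (u a b : ℝ) {L : ℝ} (hL : 0 < L) :
    (u * (a ^ 2 - b ^ 2) - u ^ 2 * (a ^ 2 + b ^ 2) / L) / 2 ≤ L / 4 * (b - a) ^ 2 := by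
  have key : L / 4 * (b - a) ^ 2 - (u * (a ^ 2 - b ^ 2) - u ^ 2 * (a ^ 2 + b ^ 2) / L) / 2
      = ((L * (a - b) - u * (a + b)) ^ 2 + (u * (a - b)) ^ 2) / (4 * L) := by
    field_simp
    ring
  have : 0 ≤ ((L * (a - b) - u * (a + b)) ^ 2 + (u * (a - b)) ^ 2) / (4 * L) := by positivity
  linarith

section

variable {Ω : Type*} [MeasurableSpace Ω] {ν : Measure Ω} [IsFiniteMeasure ν]
  {f : Ω → ℝ} {M : ℝ}

lemma integrable_sub_sq_div_mul {u : Ω → ℝ} (hu : Measurable u) {C : ℝ} (huC : ∀ ω, |u ω| ≤ C)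
    (hf : Measurable f) (hf0 : ∀ ω, 0 ≤ f ω) (hfM : ∀ ω, f ω ≤ M) (L : ℝ) :
    Integrable (fun ω => (u ω - u ω ^ 2 / L) * f ω) ν := by
  refine .of_bound (by fun_prop) ((C + C ^ 2 / |L|) * M) (.of_forall fun ω => ?_)
  have hC : 0 ≤ C := (abs_nonneg _).trans (huC ω)
  rw [Real.norm_eq_abs, abs_mul, abs_of_nonneg (hf0 ω)]
  refine mul_le_mul ((abs_sub _ _).trans (add_le_add (huC ω) ?_)) (hfM ω) (hf0 ω) (by positivity)
  rw [abs_div, abs_pow]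
  gcongr
  exact huC ω

lemma integrable_sqrt_comp_sub_sqrt_sq {σ : Ω → Ω} (hσ : Measurable σ) (hf : Measurable f)
    (hf0 : ∀ ω, 0 ≤ f ω) (hfM : ∀ ω, f ω ≤ M) :
    Integrable (fun ω => (√(f (σ ω)) - √(f ω)) ^ 2) ν := by
  refine .of_bound (by fun_prop) (2 * M) (.of_forall fun ω => ?_)
  have ha := Real.sq_sqrt (hf0 ω)
  have hb := Real.sq_sqrt (hf0 (σ ω))
  rw [Real.norm_eq_abs, abs_of_nonneg (sq_nonneg _)]
  nlinarith [hfM ω, hfM (σ ω), mul_nonneg (Real.sqrt_nonneg (f ω)) (Real.sqrt_nonneg (f (σ ω)))]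

theorem integral_sub_sq_div_mul_le {σ : Ω → Ω} (hσ : MeasurePreserving σ ν ν)
    {u : Ω → ℝ} (hu : Measurable u) {C : ℝ} (huC : ∀ ω, |u ω| ≤ C) (huσ : ∀ ω, u (σ ω) = -u ω)
    (hf : Measurable f) (hf0 : ∀ ω, 0 ≤ f ω) (hfM : ∀ ω, f ω ≤ M) {L : ℝ} (hL : 0 < L) :
    ∫ ω, (u ω - u ω ^ 2 / L) * f ω ∂ν ≤ L / 4 * ∫ ω, (√(f (σ ω)) - √(f ω)) ^ 2 ∂ν := by
  set g : Ω → ℝ := fun ω => (u ω - u ω ^ 2 / L) * f ω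
  have hg : Integrable g ν := integrable_sub_sq_div_mul hu huC hf hf0 hfM L
  have hgσ : ∫ ω, g (σ ω) ∂ν = ∫ ω, g ω ∂ν := by
    rw [← integral_map hσ.aemeasurable (hσ.map_eq.symm ▸ hg.aestronglyMeasurable), hσ.map_eq]
  have hgσi : Integrable (fun ω => g (σ ω)) ν := hσ.integrable_comp_of_integrable hg
  calc ∫ ω, g ω ∂ν = ∫ ω, (g ω + g (σ ω)) / 2 ∂ν := by
        rw [integral_div, integral_add hg hgσi, hgσ]
        ring
    _ ≤ ∫ ω, L / 4 * (√(f (σ ω)) - √(f ω)) ^ 2 ∂ν := by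
        refine integral_mono ((hg.add hgσi).div_const 2)
          ((integrable_sqrt_comp_sub_sqrt_sq hσ.measurable hf hf0 hfM).const_mul _) fun ω => ?_
        have h := half_mul_sq_sub_sq_le (u ω) (√(f ω)) (√(f (σ ω))) hL
        rw [Real.sq_sqrt (hf0 ω), Real.sq_sqrt (hf0 (σ ω))] at h
        simp only [g, huσ]
        exact le_of_eq_of_le (by ring) h
    _ = L / 4 * ∫ ω, (√(f (σ ω)) - √(f ω)) ^ 2 ∂ν := integral_const_mul _ _

theorem ofReal_integral_sum_sub_sq_div_mul_le {κ : Type*} (K : Finset κ) {σ : κ → Ω → Ω}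
    (hσ : ∀ k, MeasurePreserving (σ k) ν ν) {u : κ → Ω → ℝ} (hu : ∀ k, Measurable (u k))
    (huC : ∀ k, ∃ C, ∀ ω, |u k ω| ≤ C) (huσ : ∀ k ω, u k (σ k ω) = -u k ω)
    (hf : Measurable f) (hf0 : ∀ ω, 0 ≤ f ω) (hfM : ∀ ω, f ω ≤ M) {L : ℝ} (hL : 0 < L) :
    ENNReal.ofReal (∫ ω, (∑ k ∈ K, (u k ω - u k ω ^ 2 / L)) * f ω ∂ν)
      ≤ ENNReal.ofReal (L / 4) *
        ∑ k ∈ K, ∫⁻ ω, ENNReal.ofReal ((√(f (σ k ω)) - √(f ω)) ^ 2) ∂ν := by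
  choose C hC using huC
  calc _ ≤ ENNReal.ofReal (∑ k ∈ K, L / 4 * ∫ ω, (√(f (σ k ω)) - √(f ω)) ^ 2 ∂ν) := by
        refine ENNReal.ofReal_le_ofReal ?_
        simp_rw [Finset.sum_mul]
        rw [integral_finsetSum _ fun k _ => integrable_sub_sq_div_mul (hu k) (hC k) hf hf0 hfM L]
        exact Finset.sum_le_sum fun k _ =>
          integral_sub_sq_div_mul_le (hσ k) (hu k) (hC k) (huσ k) hf hf0 hfM hL
    _ = _ := by
        rw [ENNReal.ofReal_sum_of_nonneg fun k _ => by positivity, Finset.mul_sum]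
        refine Finset.sum_congr rfl fun k _ => ?_
        rw [ENNReal.ofReal_mul (by positivity), ofReal_integral_eq_lintegral_ofReal
          (integrable_sqrt_comp_sub_sqrt_sq (hσ k).measurable hf hf0 hfM)
          (.of_forall fun _ => sq_nonneg _)]
end

-- For `e = e_j` this is the coefficient `x_j H(σ_T(x)) / |x|²` of `V_T`.
def bondWeight (T : ℝ) (H : ℝ → ℝ) (e x : ℤ × ℤ) : ℝ :=
  if x ≠ 0 then ((x.1 * e.1 + x.2 * e.2 : ℤ) : ℝ) / nsq x * H (sig T x) else 0

def bondCurrent (T : ℝ) (H : ℝ → ℝ) (e x : ℤ × ℤ) (η : ℤ × ℤ → Bool) : ℝ :=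
  bondWeight T H e x * (ind (η (x + e)) - ind (η x))

lemma VT_eq_tsum (T : ℝ) (H : ℝ → ℝ) (η : ℤ × ℤ → Bool) :
    VT T H η = (∑' x, bondCurrent T H (1, 0) x η + ∑' x, bondCurrent T H (0, 1) x η)
      - 1 / Real.log T * (∑' x, bondCurrent T H (1, 0) x η ^ 2
        + ∑' x, bondCurrent T H (0, 1) x η ^ 2) := by
  simp only [VT, bondCurrent, bondWeight]
  refine congr_arg₂ _ (congr_arg₂ _ ?_ ?_) (congr_arg _ (congr_arg₂ _ ?_ ?_)) <;>
    refine tsum_congr fun x => ?_ <;> split_ifs <;> simp <;> ring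

lemma VT_eq_sum {T : ℝ} {H : ℝ → ℝ} {K : Finset (ℤ × ℤ)} (hK : ∀ x ∉ K, H (sig T x) = 0)
    (η : ℤ × ℤ → Bool) :
    VT T H η = ∑ p ∈ ({(1, 0), (0, 1)} : Finset (ℤ × ℤ)) ×ˢ K,
      (bondCurrent T H p.1 p.2 η - bondCurrent T H p.1 p.2 η ^ 2 / Real.log T) := by
  have hzero : ∀ e, ∀ x ∉ K, bondCurrent T H e x η = 0 := fun e x hx => by
    simp [bondCurrent, bondWeight, hK x hx]
  rw [VT_eq_tsum, Finset.sum_product, Finset.sum_pair (by decide)]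
  simp only [Finset.sum_sub_distrib, ← Finset.sum_div]
  rw [tsum_eq_sum fun x hx => hzero _ x hx, tsum_eq_sum fun x hx => hzero _ x hx,
    tsum_eq_sum fun x hx => by simp [hzero _ x hx], tsum_eq_sum fun x hx => by simp [hzero _ x hx]]
  ring

lemma abs_bondCurrent_le (T : ℝ) (H : ℝ → ℝ) (e x : ℤ × ℤ) (η : ℤ × ℤ → Bool) :
    |bondCurrent T H e x η| ≤ |bondWeight T H e x| := by
  rw [bondCurrent, abs_mul]
  refine mul_le_of_le_one_right (abs_nonneg _) ?_
  cases η (x + e) <;> cases η x <;> norm_num [ind]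

lemma measurable_bondCurrent (T : ℝ) (H : ℝ → ℝ) (e x : ℤ × ℤ) :
    Measurable (bondCurrent T H e x) := by
  have : Measurable ind := measurable_of_countable _
  unfold bondCurrent
  fun_prop

lemma bondCurrent_swapConf (T : ℝ) (H : ℝ → ℝ) (e x : ℤ × ℤ) (η : ℤ × ℤ → Bool) :
    bondCurrent T H e x (swapConf x (x + e) η) = -bondCurrent T H e x η := by
  by_cases he : x + e = x
  · simp [bondCurrent, he]
  · simp [bondCurrent, swapConf, he]
    ring

lemma swapConf_eq_comp_swap (x y : ℤ × ℤ) : swapConf x y = fun η => η ∘ Equiv.swap x y := by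
  funext η z
  simp only [swapConf, Function.comp_apply, Equiv.swap_apply_def]
  split_ifs <;> rfl

lemma norm_le_enorm2 (x : ℤ × ℤ) : ‖x‖ ≤ enorm2 x := by
  rw [Prod.norm_def, Int.norm_eq_abs, Int.norm_eq_abs]
  exact max_le (Real.abs_le_sqrt (by simp [nsq]; positivity))
    (Real.abs_le_sqrt (by simp [nsq]; positivity))

lemma finite_setOf_sig_le {T : ℝ} (hT : 1 < T) (b : ℝ) : {x : ℤ × ℤ | sig T x ≤ b}.Finite := by
  refine (isCompact_closedBall (0 : ℤ × ℤ) (Real.exp (b * Real.log T))).finite_of_discrete.subset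
    fun x hx => ?_
  rw [mem_closedBall_zero_iff]
  have hlog : Real.log (enorm2 x) ≤ b * Real.log T :=
    (div_le_iff₀ (Real.log_pos hT)).1 hx
  calc ‖x‖ ≤ enorm2 x := norm_le_enorm2 x
    _ ≤ Real.exp (Real.log (enorm2 x)) := Real.le_exp_log _
    _ ≤ Real.exp (b * Real.log T) := Real.exp_le_exp.2 hlog

theorem stmt16 (α : ℝ)
    (ν : Measure ((ℤ × ℤ) → Bool)) (hν : IsProbabilityMeasure ν)
    (hprod : ∀ S : Finset (ℤ × ℤ),
      ν {η | ∀ x ∈ S, η x = true} = ENNReal.ofReal (α ^ S.card))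
    (H : ℝ → ℝ) (hHc : HasCompactSupport H)
    (T : ℝ) (hT : 2 ≤ T)
    (f : ((ℤ × ℤ) → Bool) → ℝ) (hf : Measurable f) (hf0 : ∀ η, 0 ≤ f η)
    (hfb : ∃ M : ℝ, ∀ η, f η ≤ M) :
    ENNReal.ofReal (∫ η, VT T H η * f η ∂ν)
      ≤ ENNReal.ofReal (Real.log T / 4) *
        ((∑' x : ℤ × ℤ, ∫⁻ η, ENNReal.ofReal
            ((Real.sqrt (f (swapConf x (x + (1, 0)) η)) - Real.sqrt (f η)) ^ 2) ∂ν)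
          + ∑' x : ℤ × ℤ, ∫⁻ η, ENNReal.ofReal
              ((Real.sqrt (f (swapConf x (x + (0, 1)) η)) - Real.sqrt (f η)) ^ 2) ∂ν) := by
  obtain ⟨M, hfM⟩ := hfb
  obtain ⟨b, hb⟩ := hHc.bddAbove
  set K := (finite_setOf_sig_le (by linarith : (1 : ℝ) < T) b).toFinset
  have hK : ∀ x ∉ K, H (sig T x) = 0 := fun x hx =>
    image_eq_zero_of_notMem_tsupport fun h => hx (by simpa [K] using hb h)
  have hswap : ∀ x y, MeasurePreserving (swapConf x y) ν ν := fun x y =>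
    swapConf_eq_comp_swap x y ▸
      measurePreserving_comp_perm (g := fun n => ENNReal.ofReal (α ^ n)) hprod _
  simp_rw [VT_eq_sum hK]
  calc _ ≤ ENNReal.ofReal (Real.log T / 4) *
        ∑ p ∈ ({(1, 0), (0, 1)} : Finset (ℤ × ℤ)) ×ˢ K, ∫⁻ η, ENNReal.ofReal
          ((√(f (swapConf p.2 (p.2 + p.1) η)) - √(f η)) ^ 2) ∂ν :=
        ofReal_integral_sum_sub_sq_div_mul_le _ (fun p => hswap _ _)
          (fun p => measurable_bondCurrent T H p.1 p.2)
          (fun p => ⟨_, abs_bondCurrent_le T H p.1 p.2⟩)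
          (fun p => bondCurrent_swapConf T H p.1 p.2)
          hf hf0 hfM (Real.log_pos (by linarith))
    _ ≤ _ := by
        rw [Finset.sum_product, Finset.sum_pair (by decide)]
        gcongr <;> exact ENNReal.sum_le_tsum K
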